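/- For real α > 0, γ > 0, β ≥ 0, the integral I = ∫_0^∞ e^{-αw}·w^β·(1+w)^{-γ} dw satisfies I ≥ 2^{1-γ}·e^{-(α+β+γ)} / (1 + α + β + γ). -/

import Mathlib

/-!
On `w ≥ T` the integrand dominates `T ^ β * exp (-(α + γ) * w)`, since `w ^ β ≥ T ^ β` and
`(1 + w) ^ (-γ) ≥ exp (-γ * w)`; integrating this over `(T, ∞)` gives
`T ^ β * exp (-(α + γ) * T) / (α + γ)`. Taking `T = min 1 ((1 + β) / (α + γ))` this is at least
`2 * exp (-(α + β + γ)) / (1 + α + β + γ)`, which dominates the claimed bound because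
`2 ^ (1 - γ) ≤ 2`.
-/

open Real MeasureTheory Set

lemma exp_neg_mul_le_one_add_rpow_neg {w γ : ℝ} (hw : -1 < w) (hγ : 0 ≤ γ) :
    exp (-γ * w) ≤ (1 + w) ^ (-γ) := by
  have hlog : log (1 + w) ≤ w := by linarith [log_le_sub_one_of_pos (by linarith : 0 < 1 + w)]
  rw [rpow_def_of_pos (by linarith)]
  exact exp_le_exp.2 (by nlinarith)

lemma integrableOn_exp_neg_mul_mul_rpow_mul_one_add_rpow_neg {α β γ : ℝ} (hα : 0 < α)
    (hβ : -1 < β) (hγ : 0 ≤ γ) :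
    IntegrableOn (fun w => exp (-α * w) * w ^ β * (1 + w) ^ (-γ)) (Ioi 0) := by
  have hdom : IntegrableOn (fun w : ℝ => w ^ β * exp (-α * w)) (Ioi 0) := by
    simpa using integrableOn_rpow_mul_exp_neg_mul_rpow hβ one_pos hα
  refine hdom.mono' (by fun_prop) ((ae_restrict_iff' measurableSet_Ioi).2 (ae_of_all _ ?_))
  intro w (hw : 0 < w)
  have hle : (1 + w) ^ (-γ) ≤ 1 := rpow_le_one_of_one_le_of_nonpos (by linarith) (by linarith)
  rw [norm_of_nonneg (by positivity)]
  calc exp (-α * w) * w ^ β * (1 + w) ^ (-γ) ≤ exp (-α * w) * w ^ β * 1 := by gcongr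
    _ = w ^ β * exp (-α * w) := by ring

lemma rpow_mul_exp_le_exp_neg_mul_mul_rpow_mul_one_add_rpow_neg {α β γ T w : ℝ}
    (hT : 0 ≤ T) (hTw : T ≤ w) (hβ : 0 ≤ β) (hγ : 0 ≤ γ) :
    T ^ β * exp (-(α + γ) * w) ≤ exp (-α * w) * w ^ β * (1 + w) ^ (-γ) := by
  have hsplit : T ^ β * exp (-(α + γ) * w) = exp (-α * w) * T ^ β * exp (-γ * w) := by
    rw [show -(α + γ) * w = -α * w + -γ * w by ring, exp_add]; ring
  rw [hsplit]
  gcongr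
  · exact mul_nonneg (exp_pos _).le (rpow_nonneg (hT.trans hTw) _)
  · exact exp_neg_mul_le_one_add_rpow_neg (by linarith) hγ

lemma rpow_mul_exp_div_le_integral {α β γ T : ℝ} (hα : 0 < α) (hβ : 0 ≤ β) (hγ : 0 ≤ γ)
    (hT : 0 < T) :
    T ^ β * exp (-((α + γ) * T)) / (α + γ) ≤
      ∫ w in Ioi 0, exp (-α * w) * w ^ β * (1 + w) ^ (-γ) := by
  have hint := integrableOn_exp_neg_mul_mul_rpow_mul_one_add_rpow_neg hα (by linarith : -1 < β) hγ
  have htail : ∫ w in Ioi T, T ^ β * exp (-(α + γ) * w) =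
      T ^ β * exp (-((α + γ) * T)) / (α + γ) := by
    rw [integral_const_mul, integral_exp_mul_Ioi (by linarith), neg_div_neg_eq, neg_mul,
      mul_div_assoc]
  calc T ^ β * exp (-((α + γ) * T)) / (α + γ)
      = ∫ w in Ioi T, T ^ β * exp (-(α + γ) * w) := htail.symm
    _ ≤ ∫ w in Ioi T, exp (-α * w) * w ^ β * (1 + w) ^ (-γ) :=
      setIntegral_mono_on ((integrableOn_exp_mul_Ioi (by linarith) T).const_mul _)
        (hint.mono_set (Ioi_subset_Ioi hT.le)) measurableSet_Ioi fun w hw =>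
          rpow_mul_exp_le_exp_neg_mul_mul_rpow_mul_one_add_rpow_neg hT.le (le_of_lt hw) hβ hγ
    _ ≤ ∫ w in Ioi 0, exp (-α * w) * w ^ β * (1 + w) ^ (-γ) := by
      refine setIntegral_mono_set hint ?_ (Ioi_subset_Ioi hT.le).eventuallyLE
      filter_upwards [ae_restrict_mem measurableSet_Ioi] with w (hw : 0 < w)
      positivity

lemma exp_mul_one_sub_inv_le_rpow {x β : ℝ} (hx : 0 < x) (hβ : 0 ≤ β) :
    exp (β * (1 - x⁻¹)) ≤ x ^ β := by
  rw [rpow_def_of_pos hx, mul_comm]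
  exact exp_le_exp.2 (mul_le_mul_of_nonneg_right (one_sub_inv_le_log_of_pos hx) hβ)

lemma exists_pos_two_mul_exp_div_le_rpow_mul_exp_div {l β : ℝ} (hl : 0 < l) (hβ : 0 ≤ β) :
    ∃ T > 0, 2 * exp (-(l + β)) / (1 + l + β) ≤ T ^ β * exp (-(l * T)) / l := by
  rcases le_total l (1 + β) with hle | hge
  · refine ⟨1, one_pos, ?_⟩
    rw [one_rpow, one_mul, mul_one]
    calc 2 * exp (-(l + β)) / (1 + l + β) ≤ 2 * exp (-l) / (2 * l) := by
          gcongr <;> linarith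
      _ = exp (-l) / l := by rw [mul_div_mul_left _ _ two_ne_zero]
  · set u := 1 + β with hu
    have hu0 : 0 < u := by linarith
    set x := l / u with hx
    have hx1 : 1 ≤ x := by rw [hx, le_div_iff₀ hu0]; linarith
    refine ⟨u / l, by positivity, ?_⟩
    have hlx : l = x * u := by rw [hx, div_mul_cancel₀ _ hu0.ne']
    -- the exponents differ by `x - 1 + β`, and `x ≤ exp (x - 1)`
    have hexp : exp (-(l + β)) * x ≤ exp (β * (1 - (u / l)⁻¹)) * exp (-(l * (u / l))) := by
      calc exp (-(l + β)) * x ≤ exp (-(l + β)) * exp (x - 1 + β) := by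
            gcongr
            linarith [add_one_le_exp (x - 1), exp_le_exp.2 (by linarith : x - 1 ≤ x - 1 + β)]
        _ = exp (β * (1 - (u / l)⁻¹)) * exp (-(l * (u / l))) := by
            rw [← exp_add, ← exp_add, inv_div, mul_div_cancel₀ _ hl.ne', ← hx, hlx, hu]
            ring_nf
    calc 2 * exp (-(l + β)) / (1 + l + β) = 2 * u * (exp (-(l + β)) * x) / ((u + l) * l) := by
          rw [hlx]; field_simp; ring
      _ ≤ 2 * u * (exp (β * (1 - (u / l)⁻¹)) * exp (-(l * (u / l)))) / (2 * u * l) := by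
          gcongr; linarith
      _ ≤ (u / l) ^ β * exp (-(l * (u / l))) / l := by
          rw [mul_div_mul_left _ _ (by positivity)]
          gcongr
          exact exp_mul_one_sub_inv_le_rpow (by positivity) hβ

theorem integral_lower_bound (α β γ : ℝ) (hα : 0 < α) (hγ : 0 < γ) (hβ : 0 ≤ β) :
    (∫ w in Ioi (0 : ℝ), Real.exp (-α * w) * w ^ β * (1 + w) ^ (-γ)) ≥
      2 ^ (1 - γ) * Real.exp (-(α + β + γ)) / (1 + α + β + γ) := by
  obtain ⟨T, hT, hbound⟩ :=
    exists_pos_two_mul_exp_div_le_rpow_mul_exp_div (by positivity : 0 < α + γ) hβ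
  calc 2 ^ (1 - γ) * exp (-(α + β + γ)) / (1 + α + β + γ)
      ≤ 2 * exp (-(α + γ + β)) / (1 + (α + γ) + β) := by
        rw [show α + γ + β = α + β + γ by ring, show 1 + (α + γ) + β = 1 + α + β + γ by ring]
        gcongr
        exact rpow_le_self_of_one_le one_le_two (by linarith)
    _ ≤ T ^ β * exp (-((α + γ) * T)) / (α + γ) := hbound
    _ ≤ _ := rpow_mul_exp_div_le_integral hα hβ hγ.le hT
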